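/- arXiv:1902.11283 — 8 statements merged into one kernel-verified Lean document; each statement's English description precedes it below -/
import Mathlib

section
/- If m is a prime power, m = p^e with p prime and e ≥ 1, then there is no divisor g of m with 1 < g < m and s_g(m) ≥ g. -/
lemma sum_digits_pow_mul (g : ℕ) (hg : 1 < g) (q c : ℕ) (hc : 0 < c) :
    (Nat.digits g (g ^ q * c)).sum = (Nat.digits g c).sum := by
  induction q with
  | zero => simp
  | succ n ih =>
      have hpos : 0 < g ^ n * c := Nat.mul_pos (Nat.pow_pos (by omega)) hc
      have : g ^ (n + 1) * c = g * (g ^ n * c) := by ring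
      rw [this, Nat.digits_def' hg (by positivity)]
      rw [Nat.mul_mod_right, Nat.mul_div_cancel_left _ (by omega : 0 < g)]
      simpa using ih

/-- If `m = p^e` with `p` prime and `e ≥ 1`, there is no divisor `g` of `m` with
`1 < g < m` and `s_g(m) ≥ g`. -/
theorem stmt_2 (p e m : ℕ) (hp : p.Prime) (he : 1 ≤ e) (hm : m = p ^ e) :
    ¬ ∃ g : ℕ, g ∣ m ∧ 1 < g ∧ g < m ∧ g ≤ (Nat.digits g m).sum := by
  rintro ⟨g, hdvd, hg1, hgm, hsum⟩
  subst hm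
  obtain ⟨k, hk, rfl⟩ := (Nat.dvd_prime_pow hp).mp hdvd
  have hp1 : 1 < p := hp.one_lt
  have hk0 : 0 < k := by
    by_contra h
    push_neg at h
    interval_cases k
    simp at hg1
  have hke : k < e := by
    by_contra h
    push_neg at h
    exact absurd (Nat.pow_le_pow_right hp.pos h) (not_le.mpr hgm)
  have hr : e % k < k := Nat.mod_lt _ hk0
  have hdecomp : p ^ e = (p ^ k) ^ (e / k) * p ^ (e % k) := by
    rw [← pow_mul, ← pow_add, Nat.div_add_mod]
  have hclt : p ^ (e % k) < p ^ k := Nat.pow_lt_pow_right hp1 hr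
  have hsum2 : (Nat.digits (p ^ k) (p ^ e)).sum = p ^ (e % k) := by
    rw [hdecomp, sum_digits_pow_mul _ hg1 _ _ (Nat.pow_pos hp.pos),
      Nat.digits_def' hg1 (Nat.pow_pos hp.pos),
      Nat.mod_eq_of_lt hclt, Nat.div_eq_of_lt hclt]
    simp
  rw [hsum2] at hsum
  omega
end

section
/- For every integer t ≥ 1, the number m = (6t+1)(12t+1)(18t+1) satisfies s_g(m) = g for each of the three factors g ∈ {6t+1, 12t+1, 18t+1}, where s_g denotes the sum of base-g digits. -/
lemma sum_digits3 (b d0 d1 d2 : ℕ) (hb : 1 < b) (h0 : d0 < b) (h1 : d1 < b)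
    (h2 : d2 < b) (h2' : 0 < d2) :
    (Nat.digits b (d0 + b * (d1 + b * d2))).sum = d0 + d1 + d2 := by
  have hbpos : 0 < b := by omega
  rw [Nat.digits_def' hb (by positivity)]
  rw [Nat.add_mul_mod_self_left, Nat.mod_eq_of_lt h0, Nat.add_mul_div_left _ _ hbpos,
    Nat.div_eq_of_lt h0]
  rw [Nat.digits_def' hb (by positivity)]
  rw [Nat.zero_add, Nat.add_mul_mod_self_left, Nat.mod_eq_of_lt h1,
    Nat.add_mul_div_left _ _ hbpos, Nat.div_eq_of_lt h1]
  rw [Nat.digits_def' hb (by omega)]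
  rw [Nat.zero_add, Nat.mod_eq_of_lt h2, Nat.div_eq_of_lt h2, Nat.digits_zero]
  simp [List.sum_cons]; omega

lemma sum_digits4 (b d0 d1 d2 d3 : ℕ) (hb : 1 < b) (h0 : d0 < b) (h1 : d1 < b)
    (h2 : d2 < b) (h3 : d3 < b) (h3' : 0 < d3) :
    (Nat.digits b (d0 + b * (d1 + b * (d2 + b * d3)))).sum = d0 + d1 + d2 + d3 := by
  have hbpos : 0 < b := by omega
  rw [Nat.digits_def' hb (by positivity)]
  rw [Nat.add_mul_mod_self_left, Nat.mod_eq_of_lt h0, Nat.add_mul_div_left _ _ hbpos,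
    Nat.div_eq_of_lt h0, Nat.zero_add, List.sum_cons,
    sum_digits3 b d1 d2 d3 hb h1 h2 h3 h3']
  omega

/-- For every `t ≥ 1`, `m = (6t+1)(12t+1)(18t+1)` satisfies `s_g(m) = g` for each of
the factors `g ∈ {6t+1, 12t+1, 18t+1}`. -/
theorem stmt_5 (t : ℕ) (ht : 1 ≤ t) :
    ∀ g ∈ ({6 * t + 1, 12 * t + 1, 18 * t + 1} : Set ℕ),
      (Nat.digits g ((6 * t + 1) * (12 * t + 1) * (18 * t + 1))).sum = g := by
  intro g hg
  simp only [Set.mem_insert_iff, Set.mem_singleton_iff] at hg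
  rcases hg with rfl | rfl | rfl
  · have h : (6 * t + 1) * (12 * t + 1) * (18 * t + 1)
        = 0 + (6 * t + 1) * (2 + (6 * t + 1) * ((6 * t - 6) + (6 * t + 1) * 5)) := by
      obtain ⟨u, rfl⟩ : ∃ u, t = u + 1 := ⟨t - 1, by omega⟩
      have : 6 * (u + 1) - 6 = 6 * u := by omega
      rw [this]; ring
    rw [h, sum_digits4 _ _ _ _ _ (by omega) (by omega) (by omega) (by omega) (by omega)
      (by omega)]
    omega
  · have h : (6 * t + 1) * (12 * t + 1) * (18 * t + 1)
        = 0 + (12 * t + 1) * (3 * t + (12 * t + 1) * (9 * t + 1)) := by ring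
    rw [h, sum_digits3 _ _ _ _ (by omega) (by omega) (by omega) (by omega) (by omega)]
    omega
  · have h : (6 * t + 1) * (12 * t + 1) * (18 * t + 1)
        = 0 + (18 * t + 1) * ((14 * t + 1) + (18 * t + 1) * (4 * t)) := by ring
    rw [h, sum_digits3 _ _ _ _ (by omega) (by omega) (by omega) (by omega) (by omega)]
    omega
end

section
/- For every integer t ≥ 1, if 6t+1, 12t+1, and 18t+1 are all primes, then m = (6t+1)(12t+1)(18t+1) is a primary Carmichael number: m is squarefree and s_p(m) = p for every prime p dividing m. -/
lemma dig_step (b r q n : ℕ) (hb : 1 < b) (hr : r < b) (h : n = r + b * q) (hn : 0 < n) :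
    Nat.digits b n = r :: Nat.digits b q := by
  rw [Nat.digits_def' hb hn, h]
  congr 1
  · rw [Nat.add_mul_mod_self_left, Nat.mod_eq_of_lt hr]
  · rw [Nat.add_mul_div_left _ _ (by omega), Nat.div_eq_of_lt hr, Nat.zero_add]

/-- For `t ≥ 1`, if `6t+1`, `12t+1`, `18t+1` are all primes, then
`m = (6t+1)(12t+1)(18t+1)` is a primary Carmichael number. -/
theorem stmt_6 (t : ℕ) (ht : 1 ≤ t)
    (h1 : Nat.Prime (6 * t + 1)) (h2 : Nat.Prime (12 * t + 1))
    (h3 : Nat.Prime (18 * t + 1)) :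
    Squarefree ((6 * t + 1) * (12 * t + 1) * (18 * t + 1)) ∧
      ∀ p : ℕ, p.Prime → p ∣ (6 * t + 1) * (12 * t + 1) * (18 * t + 1) →
        (Nat.digits p ((6 * t + 1) * (12 * t + 1) * (18 * t + 1))).sum = p := by
  have c12 : Nat.Coprime (6 * t + 1) (12 * t + 1) :=
    (Nat.coprime_primes h1 h2).mpr (by omega)
  have c13 : Nat.Coprime (6 * t + 1) (18 * t + 1) :=
    (Nat.coprime_primes h1 h3).mpr (by omega)
  have c23 : Nat.Coprime (12 * t + 1) (18 * t + 1) :=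
    (Nat.coprime_primes h2 h3).mpr (by omega)
  constructor
  · exact ((Nat.squarefree_mul (Nat.Coprime.mul c13 c23)).mpr
      ⟨(Nat.squarefree_mul c12).mpr ⟨h1.squarefree, h2.squarefree⟩, h3.squarefree⟩)
  · intro p hp hdvd
    have hm : (6 * t + 1) * (12 * t + 1) * (18 * t + 1)
        = 1296 * t^3 + 396 * t^2 + 36 * t + 1 := by ring
    rcases (Nat.Prime.dvd_mul hp).mp hdvd with h | h
    · rcases (Nat.Prime.dvd_mul hp).mp h with h | h
      · -- p = 6t+1, digits [0, 2, 6t-6, 5]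
        have hpe : p = 6 * t + 1 := (Nat.prime_dvd_prime_iff_eq hp h1).mp h
        subst hpe
        have hb : 1 < 6 * t + 1 := by omega
        rw [dig_step _ 0 (216 * t^2 + 30 * t + 1) _ hb (by omega) (by ring) (by positivity),
          dig_step _ 2 (36 * t - 1) _ hb (by omega)
            (by
              obtain ⟨u, hu⟩ : ∃ u, 36 * t = u + 1 := ⟨36 * t - 1, by omega⟩
              have h36 : 36 * t - 1 = u := by omega
              rw [h36]; nlinarith [hu]) (by omega),
          dig_step _ (6 * t - 6) 5 _ hb (by omega) (by omega) (by omega),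
          dig_step _ 5 0 _ hb (by omega) (by omega) (by omega),
          Nat.digits_zero]
        simp; omega
      · -- p = 12t+1, digits [0, 3t, 9t+1]
        have hpe : p = 12 * t + 1 := (Nat.prime_dvd_prime_iff_eq hp h2).mp h
        subst hpe
        have hb : 1 < 12 * t + 1 := by omega
        rw [dig_step _ 0 (108 * t^2 + 24 * t + 1) _ hb (by omega) (by ring) (by positivity),
          dig_step _ (3 * t) (9 * t + 1) _ hb (by omega) (by ring) (by positivity),
          dig_step _ (9 * t + 1) 0 _ hb (by omega) (by omega) (by omega),
          Nat.digits_zero]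
        simp; omega
    · -- p = 18t+1, digits [0, 14t+1, 4t]
      have hpe : p = 18 * t + 1 := (Nat.prime_dvd_prime_iff_eq hp h3).mp h
      subst hpe
      have hb : 1 < 18 * t + 1 := by omega
      rw [dig_step _ 0 (72 * t^2 + 18 * t + 1) _ hb (by omega) (by ring) (by positivity),
        dig_step _ (14 * t + 1) (4 * t) _ hb (by omega) (by ring) (by positivity),
        dig_step _ (4 * t) 0 _ hb (by omega) (by omega) (by omega),
        Nat.digits_zero]
      simp; omega
end

section
/- Let r1 < r2 < r3 be pairwise coprime positive integers with elementary symmetric polynomials σ1, σ2, σ3, and let ℓ be the unique integer with 0 ≤ ℓ < σ3 and σ2·ℓ ≡ -σ1 (mod σ3). Then ℓ = 0 if and only if (r1, r2, r3) = (1, 2, 3). -/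
/-- With `σ₁, σ₂, σ₃` the elementary symmetric polynomials of pairwise coprime positive
integers `r₁ < r₂ < r₃`, and `ℓ` the unique integer with `0 ≤ ℓ < σ₃` and
`σ₂ ℓ ≡ -σ₁ (mod σ₃)`, one has `ℓ = 0 ↔ (r₁, r₂, r₃) = (1, 2, 3)`. -/
theorem stmt_10 (r₁ r₂ r₃ : ℕ) (h1 : 0 < r₁) (h12 : r₁ < r₂) (h23 : r₂ < r₃)
    (c12 : Nat.Coprime r₁ r₂) (c13 : Nat.Coprime r₁ r₃) (c23 : Nat.Coprime r₂ r₃)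
    (ℓ : ℕ) (hℓ : ℓ < r₁ * r₂ * r₃)
    (hcong : ((r₁ * r₂ + r₁ * r₃ + r₂ * r₃ : ℤ) * ℓ) ≡ -(r₁ + r₂ + r₃ : ℤ)
      [ZMOD (r₁ * r₂ * r₃ : ℤ)]) :
    ℓ = 0 ↔ (r₁ = 1 ∧ r₂ = 2 ∧ r₃ = 3) := by
  constructor
  · intro h0
    subst h0
    have hd := hcong.dvd
    have hdvd : (r₁ * r₂ * r₃ : ℤ) ∣ (r₁ + r₂ + r₃ : ℤ) := by
      push_cast at hd
      have h' : (r₁ * r₂ * r₃ : ℤ) ∣ -((r₁ : ℤ) + r₂ + r₃) := by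
        convert hd using 1; ring
      exact (dvd_neg).mp h'
    have hdvdN : r₁ * r₂ * r₃ ∣ r₁ + r₂ + r₃ := by exact_mod_cast hdvd
    have hle : r₁ * r₂ * r₃ ≤ r₁ + r₂ + r₃ := Nat.le_of_dvd (by omega) hdvdN
    have h3 : r₁ + r₂ + r₃ < 3 * r₃ := by omega
    have h4 : r₁ * r₂ * r₃ < 3 * r₃ := lt_of_le_of_lt hle h3
    have h5 : r₁ * r₂ < 3 := by
      have := Nat.lt_of_mul_lt_mul_right (a := r₃) (by
        simpa [Nat.mul_comm] using h4)
      exact this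
    have hr1 : r₁ = 1 := by nlinarith
    subst hr1
    have hr2 : r₂ = 2 := by nlinarith
    subst hr2
    have hr3 : r₃ = 3 := by
      have : 1 * 2 * r₃ ≤ 1 + 2 + r₃ := hle
      omega
    exact ⟨rfl, rfl, hr3⟩
  · rintro ⟨ha, hb, hc⟩
    subst ha; subst hb; subst hc
    have hd := hcong.dvd
    norm_num at hd hℓ
    -- hd : (6:ℤ) ∣ -6 - 11 * ℓ
    have h6 : (6:ℤ) ∣ 11 * (ℓ : ℤ) := by omega
    omega
end

section
/- Let r1 < r2 < r3 be pairwise coprime positive integers, σ1 = r1+r2+r3, σ2 = r1r2+r1r3+r2r3, σ3 = r1r2r3, and ℓ with 0 ≤ ℓ < σ3 satisfying σ2·ℓ ≡ -σ1 (mod σ3). Then for each j ∈ {1,2,3}, the rational number σ1/r_j + ℓ·σ3/r_j² is an integer and is at least 2. -/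
lemma aux_stmt12 (r s t : ℕ) (hr : 0 < r) (hs : 0 < s) (ht : 0 < t) (ℓ : ℕ)
    (hd : (r : ℤ) ∣ ((r * s + r * t + s * t : ℤ) * ℓ + (r + s + t))) :
    ∃ k : ℤ, 2 ≤ k ∧
      (k : ℚ) * (r : ℚ) ^ 2 = ((r : ℚ) + s + t) * r + (ℓ : ℚ) * (r * s * t) := by
  obtain ⟨m, hm⟩ := hd
  refine ⟨m - (s + t) * ℓ, ?_, ?_⟩
  · have key : (m - (s + t) * ℓ) * (r : ℤ) ^ 2 = ((r : ℤ) + s + t) * r + (ℓ : ℤ) * (r * s * t) := by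
      linear_combination (-(r : ℤ)) * hm
    have hr' : (0 : ℤ) < r := by exact_mod_cast hr
    have hs' : (0 : ℤ) < s := by exact_mod_cast hs
    have ht' : (0 : ℤ) < t := by exact_mod_cast ht
    have hl' : (0 : ℤ) ≤ ℓ := Int.natCast_nonneg ℓ
    nlinarith [key, mul_pos hr' hr', mul_nonneg hl' (by positivity : (0:ℤ) ≤ (r:ℤ) * s * t)]
  · have key : (m - (s + t) * ℓ) * (r : ℤ) ^ 2 = ((r : ℤ) + s + t) * r + (ℓ : ℤ) * (r * s * t) := by
      linear_combination (-(r : ℤ)) * hm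
    exact_mod_cast congrArg (fun z : ℤ => (z : ℚ)) key

/-- With `σ₁, σ₂, σ₃` the elementary symmetric polynomials of pairwise coprime positive
integers `r₁ < r₂ < r₃` and `ℓ` with `0 ≤ ℓ < σ₃`, `σ₂ ℓ ≡ -σ₁ (mod σ₃)`: for each
`r ∈ {r₁, r₂, r₃}`, the rational `σ₁/r + ℓσ₃/r²` is an integer `≥ 2`. -/
theorem stmt_12 (r₁ r₂ r₃ : ℕ) (h1 : 0 < r₁) (h12 : r₁ < r₂) (h23 : r₂ < r₃)
    (c12 : Nat.Coprime r₁ r₂) (c13 : Nat.Coprime r₁ r₃) (c23 : Nat.Coprime r₂ r₃)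
    (ℓ : ℕ) (hℓ : ℓ < r₁ * r₂ * r₃)
    (hcong : ((r₁ * r₂ + r₁ * r₃ + r₂ * r₃ : ℤ) * ℓ) ≡ -(r₁ + r₂ + r₃ : ℤ)
      [ZMOD (r₁ * r₂ * r₃ : ℤ)]) :
    ∀ r ∈ ({r₁, r₂, r₃} : Set ℕ), ∃ k : ℤ, 2 ≤ k ∧
      (k : ℚ) = (r₁ + r₂ + r₃ : ℚ) / r + (ℓ : ℚ) * (r₁ * r₂ * r₃) / r ^ 2 := by
  have h2 : 0 < r₂ := h1.trans h12
  have h3 : 0 < r₃ := h2.trans h23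
  have hdvd : (r₁ * r₂ * r₃ : ℤ) ∣ ((r₁ * r₂ + r₁ * r₃ + r₂ * r₃ : ℤ) * ℓ + (r₁ + r₂ + r₃)) := by
    have := hcong.dvd
    obtain ⟨c, hc⟩ := this
    exact ⟨-c, by linarith [hc]⟩
  intro r hr
  have main : ∀ s t : ℕ, 0 < s → 0 < t → 0 < r →
      ((r : ℤ) ∣ ((r * s + r * t + s * t : ℤ) * ℓ + (r + s + t))) →
      ((r : ℚ) + s + t = (r₁ : ℚ) + r₂ + r₃) → ((r : ℚ) * s * t = (r₁ : ℚ) * r₂ * r₃) →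
      ∃ k : ℤ, 2 ≤ k ∧
        (k : ℚ) = (r₁ + r₂ + r₃ : ℚ) / r + (ℓ : ℚ) * (r₁ * r₂ * r₃) / r ^ 2 := by
    intro s t hs ht hr0 hd hsum hprod
    obtain ⟨k, hk2, hkq⟩ := aux_stmt12 r s t hr0 hs ht ℓ hd
    refine ⟨k, hk2, ?_⟩
    have hrq : (r : ℚ) ≠ 0 := by positivity
    field_simp
    rw [← hsum, ← hprod]
    linear_combination hkq
  rcases hr with rfl | rfl | rfl
  · refine main r₂ r₃ h2 h3 h1 ?_ (by push_cast; ring) (by push_cast; ring)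
    exact dvd_trans ⟨(r₂ : ℤ) * r₃, by ring⟩ hdvd
  · refine main r₁ r₃ h1 h3 h2 ?_ (by push_cast; ring) (by push_cast; ring)
    rw [show ((r : ℤ) * r₁ + r * r₃ + r₁ * r₃) * ℓ + (r + r₁ + r₃)
        = ((r₁ : ℤ) * r + r₁ * r₃ + r * r₃) * ℓ + (r₁ + r + r₃) from by ring]
    exact dvd_trans ⟨(r₁ : ℤ) * r₃, by ring⟩ hdvd
  · refine main r₁ r₂ h1 h2 h3 ?_ (by push_cast; ring) (by push_cast; ring)
    rw [show ((r : ℤ) * r₁ + r * r₂ + r₁ * r₂) * ℓ + (r + r₁ + r₂)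
        = ((r₁ : ℤ) * r₂ + r₁ * r + r₂ * r) * ℓ + (r₁ + r₂ + r) from by ring]
    exact dvd_trans ⟨(r₁ : ℤ) * r₂, by ring⟩ hdvd
end

section
/- If m is a Carmichael number and p is a prime divisor of m, then there exists an even integer h ≥ 6 such that m equals the h-gonal number with index p, namely h = 2((m/p - 1)/(p - 1) + 1). -/
/-- If `m` is a Carmichael number (squarefree, composite, with `p - 1 ∣ m - 1` for
every prime `p ∣ m`) and `p` is a prime divisor of `m`, then there is an even integer
`h ≥ 6` with `h = 2((m/p - 1)/(p - 1) + 1)` such that `m` is the `h`-gonal number of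
index `p`. -/
theorem stmt_16 (m : ℕ) (hsf : Squarefree m) (hcomp : 1 < m ∧ ¬ m.Prime)
    (hK : ∀ q : ℕ, q.Prime → q ∣ m → (q - 1 : ℤ) ∣ (m - 1 : ℤ))
    (p : ℕ) (hp : p.Prime) (hpm : p ∣ m) :
    ∃ h : ℤ, Even h ∧ 6 ≤ h ∧
      h = 2 * (((m : ℤ) / p - 1) / ((p : ℤ) - 1) + 1) ∧
      (p : ℤ) ^ 2 * (h - 2) - (p : ℤ) * (h - 4) = 2 * m := by
  obtain ⟨k, hk⟩ := hpm
  have hp2 : 2 ≤ p := hp.two_le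
  have hpZ : (1 : ℤ) < (p : ℤ) := by exact_mod_cast hp2
  have hdvd := hK p hp ⟨k, hk⟩
  have hmk : (m : ℤ) = (p : ℤ) * k := by exact_mod_cast hk
  have hdk : ((p : ℤ) - 1) ∣ ((k : ℤ) - 1) := by
    have : ((k : ℤ) - 1) = ((m : ℤ) - 1) - ((p : ℤ) - 1) * k := by rw [hmk]; ring
    rw [this]
    exact dvd_sub hdvd (Dvd.intro _ rfl)
  obtain ⟨t, ht⟩ := hdk
  have hk1 : 1 < k := by
    rcases Nat.lt_or_ge 1 k with h | h
    · exact h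
    · interval_cases k
      · simp at hk; omega
      · exfalso; apply hcomp.2; rw [hk, mul_one]; exact hp
  have hknep : k ≠ p := by
    intro he
    have : p * p ∣ m := by rw [hk, he]
    exact hp.not_isUnit (hsf p this)
  have ht1 : 1 ≤ t := by
    nlinarith [ht, hpZ, (by exact_mod_cast hk1 : (1:ℤ) < (k:ℤ))]
  have ht2 : 2 ≤ t := by
    rcases lt_or_ge t 2 with h | h
    · exfalso
      have : t = 1 := by omega
      rw [this, mul_one] at ht
      have : (k : ℤ) = (p : ℤ) := by linarith
      exact hknep (by exact_mod_cast this)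
    · exact h
  refine ⟨2 * (t + 1), ⟨t + 1, by ring⟩, by linarith, ?_, ?_⟩
  · have h1 : (m : ℤ) / p = k := by rw [hmk]; exact Int.mul_ediv_cancel_left _ (by positivity)
    have h2 : ((k : ℤ) - 1) / ((p : ℤ) - 1) = t := by
      rw [ht]; exact Int.mul_ediv_cancel_left _ (by linarith)
    rw [h1, h2]
  · have : (k : ℤ) = (p - 1) * t + 1 := by linarith
    rw [hmk, this]; ring
end

section
/- The set of positive integers m admitting a strict s-decomposition is infinite. Concretely, for every t ≥ 1, m = (6t+1)(12t+1)(18t+1) satisfies s_g(m) = g for each factor g ∈ {6t+1, 12t+1, 18t+1}, and these values are strictly increasing in t. -/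
/-- `m` has a strict s-decomposition: a factorization into factors `g > 1`
(listed with multiplicity, giving exponents) with `s_g(m) = g` for each factor. -/
def HasStrictSDecomp (m : ℕ) : Prop :=
  ∃ L : List ℕ, L ≠ [] ∧ (∀ g ∈ L, 1 < g ∧ (Nat.digits g m).sum = g) ∧ L.prod = m

lemma digits_step (g n a q : ℕ) (hg : 1 < g) (ha : a < g) (hn : n = a + g * q)
    (h0 : 0 < n) : Nat.digits g n = a :: Nat.digits g q := by
  rw [Nat.digits_def' hg h0, hn]
  congr 1
  · simp [Nat.add_mul_mod_self_left, Nat.mod_eq_of_lt ha]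
  · rw [Nat.add_mul_div_left _ _ (by omega : 0 < g), Nat.div_eq_of_lt ha, Nat.zero_add]

lemma sum1 (u : ℕ) :
    (Nat.digits (6*u+7) ((6*u+7) * (12*u+13) * (18*u+19))).sum = 6*u+7 := by
  have hg : 1 < 6*u+7 := by omega
  rw [digits_step (6*u+7) _ 0 ((12*u+13)*(18*u+19)) hg (by omega) (by ring) (by positivity)]
  rw [digits_step (6*u+7) _ 2 (36*u+35) hg (by omega) (by ring) (by positivity)]
  rw [digits_step (6*u+7) _ (6*u) 5 hg (by omega) (by ring) (by omega)]
  rw [digits_step (6*u+7) _ 5 0 hg (by omega) (by ring) (by omega)]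
  simp; omega

lemma sum2 (u : ℕ) :
    (Nat.digits (12*u+13) ((6*u+7) * (12*u+13) * (18*u+19))).sum = 12*u+13 := by
  have hg : 1 < 12*u+13 := by omega
  rw [digits_step (12*u+13) _ 0 ((6*u+7)*(18*u+19)) hg (by omega) (by ring) (by positivity)]
  rw [digits_step (12*u+13) _ (3*u+3) (9*u+10) hg (by omega) (by ring) (by positivity)]
  rw [digits_step (12*u+13) _ (9*u+10) 0 hg (by omega) (by ring) (by omega)]
  simp; omega

lemma sum3 (u : ℕ) :
    (Nat.digits (18*u+19) ((6*u+7) * (12*u+13) * (18*u+19))).sum = 18*u+19 := by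
  have hg : 1 < 18*u+19 := by omega
  rw [digits_step (18*u+19) _ 0 ((6*u+7)*(12*u+13)) hg (by omega) (by ring) (by positivity)]
  rw [digits_step (18*u+19) _ (14*u+15) (4*u+4) hg (by omega) (by ring) (by positivity)]
  rw [digits_step (18*u+19) _ (4*u+4) 0 hg (by omega) (by ring) (by omega)]
  simp; omega

lemma part2 : ∀ t : ℕ, 1 ≤ t →
      ∀ g ∈ ({6 * t + 1, 12 * t + 1, 18 * t + 1} : Set ℕ),
        (Nat.digits g ((6 * t + 1) * (12 * t + 1) * (18 * t + 1))).sum = g := by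
  intro t ht g hg
  obtain ⟨u, rfl⟩ : ∃ u, t = u + 1 := ⟨t - 1, by omega⟩
  simp only [Set.mem_insert_iff, Set.mem_singleton_iff] at hg
  have h1 : 6 * (u+1) + 1 = 6*u+7 := by ring
  have h2 : 12 * (u+1) + 1 = 12*u+13 := by ring
  have h3 : 18 * (u+1) + 1 = 18*u+19 := by ring
  rcases hg with rfl | rfl | rfl
  · rw [h1, h2, h3]; exact sum1 u
  · rw [h1, h2, h3]; exact sum2 u
  · rw [h1, h2, h3]; exact sum3 u

lemma part3 : StrictMono (fun t : ℕ => (6 * t + 1) * (12 * t + 1) * (18 * t + 1)) := by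
  intro a b h
  simp only
  exact Nat.mul_lt_mul'' (Nat.mul_lt_mul'' (by omega) (by omega)) (by omega)

/-- The set of numbers with a strict s-decomposition is infinite; concretely, for
every `t ≥ 1`, `(6t+1)(12t+1)(18t+1)` satisfies `s_g(m) = g` for each factor, and
these values are strictly increasing in `t`. -/
theorem stmt_18 :
    {m : ℕ | HasStrictSDecomp m}.Infinite ∧
    (∀ t : ℕ, 1 ≤ t →
      ∀ g ∈ ({6 * t + 1, 12 * t + 1, 18 * t + 1} : Set ℕ),
        (Nat.digits g ((6 * t + 1) * (12 * t + 1) * (18 * t + 1))).sum = g) ∧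
    StrictMono (fun t : ℕ => (6 * t + 1) * (12 * t + 1) * (18 * t + 1)) := by
  refine ⟨?_, part2, part3⟩
  apply Set.infinite_of_injective_forall_mem
    (f := fun n : ℕ => (6 * (n+1) + 1) * (12 * (n+1) + 1) * (18 * (n+1) + 1))
    (fun a b hab => Nat.succ_injective (part3.injective hab))
  intro n
  refine ⟨[6 * (n+1) + 1, 12 * (n+1) + 1, 18 * (n+1) + 1], by simp, ?_, by simp [List.prod]; ring⟩
  intro g hg
  have := part2 (n+1) (by omega) g (by simpa using hg)
  exact ⟨by rcases (by simpa using hg : _ ∨ _ ∨ _) with rfl | rfl | rfl <;> omega, this⟩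
end

section
/- Let S'(x) count positive integers below x admitting a strict s-decomposition. Then S'(x) > (1/11)·x^{1/3} - 1/3 for all real x ≥ 1. -/
lemma sd_family (s : ℕ) :
    HasStrictSDecomp ((6*s+7)*((12*s+13)*(18*s+19))) := by
  refine ⟨[6*s+7, 12*s+13, 18*s+19], by simp, ?_, by simp⟩
  have e1 : Nat.digits (6*s+7) ((6*s+7)*((12*s+13)*(18*s+19))) = [0, 2, 6*s, 5] := by
    have h := Nat.digits_ofDigits (6*s+7) (by omega) [0,2,6*s,5]
      (by intro l hl; fin_cases hl <;> omega) (by simp)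
    rw [show (6*s+7)*((12*s+13)*(18*s+19)) = Nat.ofDigits (6*s+7) [0,2,6*s,5] from by
      simp [Nat.ofDigits_cons, Nat.ofDigits_nil]; ring, h]
  have e2 : Nat.digits (12*s+13) ((6*s+7)*((12*s+13)*(18*s+19))) = [0, 3*s+3, 9*s+10] := by
    have h := Nat.digits_ofDigits (12*s+13) (by omega) [0,3*s+3,9*s+10]
      (by intro l hl; fin_cases hl <;> omega) (by simp)
    rw [show (6*s+7)*((12*s+13)*(18*s+19)) = Nat.ofDigits (12*s+13) [0,3*s+3,9*s+10] from by
      simp [Nat.ofDigits_cons, Nat.ofDigits_nil]; ring, h]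
  have e3 : Nat.digits (18*s+19) ((6*s+7)*((12*s+13)*(18*s+19))) = [0, 14*s+15, 4*s+4] := by
    have h := Nat.digits_ofDigits (18*s+19) (by omega) [0,14*s+15,4*s+4]
      (by intro l hl; fin_cases hl <;> omega) (by simp)
    rw [show (6*s+7)*((12*s+13)*(18*s+19)) = Nat.ofDigits (18*s+19) [0,14*s+15,4*s+4] from by
      simp [Nat.ofDigits_cons, Nat.ofDigits_nil]; ring, h]
  intro g hg
  simp only [List.mem_cons, List.not_mem_nil, or_false] at hg
  rcases hg with rfl | rfl | rfl
  · exact ⟨by omega, by rw [e1]; simp; omega⟩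
  · exact ⟨by omega, by rw [e2]; simp; omega⟩
  · exact ⟨by omega, by rw [e3]; simp; omega⟩

lemma sd_45 : HasStrictSDecomp 45 :=
  ⟨[3,3,5], by simp, by
    intro g hg
    simp only [List.mem_cons, List.not_mem_nil, or_false] at hg
    rcases hg with rfl | rfl | rfl <;> norm_num, by norm_num⟩

/-- The count `S'(x)` of positive integers below `x` admitting a strict
s-decomposition satisfies `S'(x) > x^(1/3)/11 - 1/3` for all real `x ≥ 1`. -/
theorem stmt_19 (x : ℝ) (hx : 1 ≤ x) :
    ((({m : ℕ | 0 < m ∧ (m : ℝ) < x ∧ HasStrictSDecomp m}).ncard : ℝ)) >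
      (1 / 11) * x ^ ((1 : ℝ) / 3) - 1 / 3 := by
  set y : ℝ := x ^ ((1 : ℝ)/3) with hy
  have hx0 : (0:ℝ) ≤ x := by linarith
  have hy0 : 0 ≤ y := Real.rpow_nonneg hx0 _
  have hyc : y ^ 3 = x := by
    rw [hy, ← Real.rpow_natCast (x ^ ((1:ℝ)/3)) 3, ← Real.rpow_mul hx0]
    norm_num
  set A := {m : ℕ | 0 < m ∧ (m : ℝ) < x ∧ HasStrictSDecomp m} with hA
  have hAfin : A.Finite := by
    apply Set.Finite.subset (Set.finite_Iio ⌈x⌉₊)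
    intro m hm
    exact Nat.lt_ceil.mpr hm.2.1
  by_cases h45 : (45:ℝ) < x
  · have h45A : 45 ∈ A := ⟨by norm_num, h45, sd_45⟩
    by_cases hy14 : 14 ≤ y
    · set T := ⌊(y-3)/11⌋₊ with hT
      have hT1 : (T:ℝ) ≤ (y-3)/11 := Nat.floor_le (by linarith)
      have hT2 : (y-3)/11 < T + 1 := Nat.lt_floor_add_one _
      set f : ℕ → ℕ := fun s => (6*s+7)*((12*s+13)*(18*s+19)) with hf
      have hfinj : Function.Injective f := by
        have : StrictMono f := by
          apply strictMono_nat_of_lt_succ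
          intro n
          simp only [hf]
          nlinarith [n.zero_le]
        exact this.injective
      have hfx : ∀ s < T, (f s : ℝ) < x := by
        intro s hs
        have h1 : (f s : ℝ) < ((11*(s:ℝ)+14))^3 := by
          have h : (0:ℝ) ≤ (s:ℝ) := Nat.cast_nonneg s
          simp only [hf]; push_cast
          nlinarith [mul_nonneg (mul_nonneg h h) h, mul_nonneg h h, h]
        have hsT : (s:ℝ) + 1 ≤ T := by exact_mod_cast hs
        have h2 : (11*(s:ℝ)+14) ≤ y := by nlinarith
        have h3 : ((11*(s:ℝ)+14))^3 ≤ y^3 := by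
          apply pow_le_pow_left₀ (by positivity) h2
        linarith [hyc ▸ h3]
      set F : Finset ℕ := insert 45 ((Finset.range T).image f) with hF
      have h45nm : 45 ∉ (Finset.range T).image f := by
        simp only [Finset.mem_image, not_exists]
        rintro s ⟨_, hs⟩
        have : 1729 ≤ f s := by
          simp only [hf]
          calc (1729:ℕ) = 7 * (13 * 19) := by norm_num
          _ ≤ (6*s+7)*((12*s+13)*(18*s+19)) :=
            Nat.mul_le_mul (by omega) (Nat.mul_le_mul (by omega) (by omega))
        omega
      have hcard : F.card = T + 1 := by
        rw [hF, Finset.card_insert_of_notMem h45nm,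
          Finset.card_image_of_injective _ hfinj, Finset.card_range]
      have hsub : ↑F ⊆ A := by
        intro m hm
        simp only [hF, Finset.coe_insert, Set.mem_insert_iff, Finset.coe_image,
          Set.mem_image, Finset.mem_coe, Finset.mem_range] at hm
        rcases hm with rfl | ⟨s, hs, rfl⟩
        · exact h45A
        · exact ⟨by simp only [hf]; positivity, hfx s hs, sd_family s⟩
      have hle : (F.card : ℝ) ≤ A.ncard := by
        have := Set.ncard_le_ncard hsub hAfin
        rw [Set.ncard_coe_finset] at this
        exact_mod_cast this
      rw [hcard] at hle
      push_cast at hle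
      linarith
    · push_neg at hy14
      have h1 : 1 ≤ A.ncard := (Set.ncard_pos hAfin).mpr ⟨45, h45A⟩
      have : (1:ℝ) ≤ A.ncard := by exact_mod_cast h1
      linarith
  · push_neg at h45
    have hylt : y < 11/3 := by
      by_contra h
      push_neg at h
      have : (11/3:ℝ)^3 ≤ y^3 := by
        apply pow_le_pow_left₀ (by norm_num) h
      rw [hyc] at this
      norm_num at this
      linarith
    have : (0:ℝ) ≤ A.ncard := by positivity
    linarith
end
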